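/- arXiv:1006.4276 — 2 statements merged into one kernel-verified Lean document; each statement's English description precedes it below -/
import Mathlib

section
/- The 3×3 skew-symmetric matrix C with rows (0, −1, −1), (1, 0, 0), (1, 0, 0) is an unfolding of the 2×2 skew-symmetrizable matrix B with rows (0, −1), (2, 0), with respect to the index sets E_1 = {1} and E_2 = {2, 3}: for every finite sequence k_1, …, k_r of indices in {1, 2}, the matrix μ̂_{k_1}⋯μ̂_{k_r}(C) satisfies assertions (1)–(2) with respect to μ_{k_1}⋯μ_{k_r}(B). -/
open Matrix

/-- Matrix mutation in direction `k`. -/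
def mutate {n : ℕ} (B : Matrix (Fin n) (Fin n) ℤ) (k : Fin n) : Matrix (Fin n) (Fin n) ℤ :=
  Matrix.of fun i j =>
    if i = k ∨ j = k then -B i j
    else B i j + (|B i k| * B k j + B i k * |B k j|) / 2

/-- The mutation class of `B`: all matrices obtained from `B` by finite sequences of mutations. -/
def mutationClass {n : ℕ} (B : Matrix (Fin n) (Fin n) ℤ) : Set (Matrix (Fin n) (Fin n) ℤ) :=
  {B' | ∃ l : List (Fin n), B' = l.foldl mutate B}

/-- `B` is skew-symmetrizable: there are positive integers `d i` with `b_ij d_j = -(b_ji d_i)`. -/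
def IsSkewSymmetrizable {n : ℕ} (B : Matrix (Fin n) (Fin n) ℤ) : Prop :=
  ∃ d : Fin n → ℤ, (∀ i, 0 < d i) ∧ ∀ i j, B i j * d j = -(B j i * d i)

/-- Assertions (1)–(2) of the definition of unfolding, for the fibers `E i = π ⁻¹ {i}`:
(1) for all `i` and all `b` the sum of `C a b` over `a ∈ E i` equals `B i (π b)`;
(2) if `B (π a) (π b) ≥ 0` then `C a b ≥ 0`. -/
def SatisfiesUnfoldingConds {m n : ℕ} (π : Fin m → Fin n)
    (B : Matrix (Fin n) (Fin n) ℤ) (C : Matrix (Fin m) (Fin m) ℤ) : Prop :=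
  (∀ (i : Fin n) (b : Fin m),
      (∑ a ∈ Finset.univ.filter (fun a => π a = i), C a b) = B i (π b)) ∧
  (∀ a b : Fin m, 0 ≤ B (π a) (π b) → 0 ≤ C a b)

/-- The composite mutation `μ̂_i`: the composition of the mutations `μ_a` over all
`a ∈ E i = π ⁻¹ {i}`, performed in a fixed order. -/
def compMutate {m n : ℕ} (π : Fin m → Fin n) (C : Matrix (Fin m) (Fin m) ℤ)
    (i : Fin n) : Matrix (Fin m) (Fin m) ℤ :=
  ((Finset.univ.filter (fun a => π a = i)).sort (· ≤ ·)).foldl mutate C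

/-- `C` is an unfolding of `B` (w.r.t. the index sets `E i = π ⁻¹ {i}`): after any finite
sequence of composite mutations, assertions (1)–(2) hold for the correspondingly
mutated matrices. -/
def IsUnfolding {m n : ℕ} (π : Fin m → Fin n) (B : Matrix (Fin n) (Fin n) ℤ)
    (C : Matrix (Fin m) (Fin m) ℤ) : Prop :=
  ∀ l : List (Fin n),
    SatisfiesUnfoldingConds π (l.foldl mutate B) (l.foldl (compMutate π) C)

/-!
Mutation commutes with negation: the numerator of the correction term `(|a| b + a |b|) / 2`
is odd in `(a, b)` and always even. Every mutation of `B` and every composite mutation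
of `C` negates the matrix, so the mutations along `l` send `(B, C)` to `(-1) ^ |l| • (B, C)`.
Assertions (1)–(2) hold for `(B, C)` by inspection, and pass to `(-B, -C)`: (1) is linear, and
(2) for `-B` follows from (2) for `B` by sign-skew-symmetry of `B` and skew-symmetry of `C`.
-/

theorem even_abs_mul_add_mul_abs (a b : ℤ) : Even (|a| * b + a * |b|) := by
  rw [Int.even_add]
  simp [Int.even_mul, even_abs]

theorem mutate_neg {n : ℕ} (B : Matrix (Fin n) (Fin n) ℤ) (k : Fin n) :
    mutate (-B) k = -mutate B k := by
  ext i j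
  have hdvd : 2 ∣ |B i k| * B k j + B i k * |B k j| :=
    even_iff_two_dvd.mp (even_abs_mul_add_mul_abs _ _)
  simp only [mutate, of_apply, neg_apply, abs_neg]
  split_ifs
  · rfl
  -- `Int.ediv` commutes with negation only on multiples of the divisor
  · rw [show |B i k| * -B k j + -B i k * |B k j| = -(|B i k| * B k j + B i k * |B k j|) by ring,
      Int.neg_ediv_of_dvd hdvd, neg_add]

theorem foldl_mutate_neg {n : ℕ} (B : Matrix (Fin n) (Fin n) ℤ) (l : List (Fin n)) :
    l.foldl mutate (-B) = -l.foldl mutate B := by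
  induction l generalizing B with
  | nil => rfl
  | cons k l ih => simp only [List.foldl_cons, mutate_neg, ih]

theorem compMutate_neg {m n : ℕ} (π : Fin m → Fin n) (C : Matrix (Fin m) (Fin m) ℤ)
    (i : Fin n) :
    compMutate π (-C) i = -compMutate π C i :=
  foldl_mutate_neg C _

theorem List.foldl_eq_neg_one_pow_length_zsmul {M ι : Type*} [AddCommGroup M] {f : M → ι → M}
    (hf : ∀ x k, f (-x) k = -f x k) {x : M} (hx : ∀ k, f x k = -x) (l : List ι) :
    l.foldl f x = (-1 : ℤ) ^ l.length • x := by
  induction l generalizing x with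
  | nil => simp
  | cons k l ih =>
    have hnegx : ∀ k, f (-x) k = -(-x) := fun k => by rw [hf, hx]
    rw [List.foldl_cons, hx, ih hnegx, List.length_cons, pow_succ, mul_comm, mul_zsmul,
      neg_one_zsmul, smul_neg]

theorem IsSkewSymmetrizable.nonneg_of_nonpos {n : ℕ} {B : Matrix (Fin n) (Fin n) ℤ}
    (hB : IsSkewSymmetrizable B) {i j : Fin n} (hij : B i j ≤ 0) : 0 ≤ B j i := by
  obtain ⟨d, hd, hsym⟩ := hB
  refine nonneg_of_mul_nonneg_left ?_ (hd i)
  rw [← neg_neg (B j i * d i), ← hsym]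
  exact neg_nonneg.mpr (mul_nonpos_of_nonpos_of_nonneg hij (hd j).le)

theorem SatisfiesUnfoldingConds.neg {m n : ℕ} {π : Fin m → Fin n}
    {B : Matrix (Fin n) (Fin n) ℤ} {C : Matrix (Fin m) (Fin m) ℤ}
    (hB : IsSkewSymmetrizable B) (hC : Cᵀ = -C) (h : SatisfiesUnfoldingConds π B C) :
    SatisfiesUnfoldingConds π (-B) (-C) := by
  refine ⟨fun i b => ?_, fun a b hab => ?_⟩
  · simp only [neg_apply, Finset.sum_neg_distrib, h.1]
  · have hba : 0 ≤ C b a := h.2 b a (hB.nonneg_of_nonpos (neg_nonneg.mp hab))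
    have hC_ab : C a b = -C b a := congrFun (congrFun hC b) a
    simp only [neg_apply]
    omega

theorem compMutate_example_one (k : Fin 2) :
    compMutate ![0, 1, 1] !![0, -1, -1; 1, 0, 0; 1, 0, 0] k = -!![0, -1, -1; 1, 0, 0; 1, 0, 0] := by
  have hE₁ : (Finset.univ.filter (fun a => (![0, 1, 1] : Fin 3 → Fin 2) a = 0)).sort (· ≤ ·)
      = [0] := by
    rw [show Finset.univ.filter (fun a => (![0, 1, 1] : Fin 3 → Fin 2) a = 0) = {0} by decide,
      Finset.sort_singleton]
  have hE₂ : (Finset.univ.filter (fun a => (![0, 1, 1] : Fin 3 → Fin 2) a = 1)).sort (· ≤ ·)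
      = [1, 2] := by
    rw [show Finset.univ.filter (fun a => (![0, 1, 1] : Fin 3 → Fin 2) a = 1) = {1, 2} by decide,
      Finset.sort_insert (· ≤ ·) (by decide) (by decide), Finset.sort_singleton]
  match k with
  | 0 => rw [compMutate, hE₁]; decide
  | 1 => rw [compMutate, hE₂]; decide

/-- The given `3 × 3` skew-symmetric matrix is an unfolding of the `2 × 2` matrix `B` with
rows `(0, -1), (2, 0)`, with `E_1 = {1}` and `E_2 = {2, 3}`. -/
theorem unfolding_example_one :
    IsUnfolding (![0, 1, 1] : Fin 3 → Fin 2)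
      !![0, -1; 2, 0]
      !![0, -1, -1; 1, 0, 0; 1, 0, 0] := by
  intro l
  have hB := List.foldl_eq_neg_one_pow_length_zsmul mutate_neg
    (x := !![(0 : ℤ), -1; 2, 0]) (by decide) l
  have hC := List.foldl_eq_neg_one_pow_length_zsmul (compMutate_neg _) compMutate_example_one l
  have hbase : SatisfiesUnfoldingConds (![0, 1, 1] : Fin 3 → Fin 2)
      !![0, -1; 2, 0] !![0, -1, -1; 1, 0, 0; 1, 0, 0] :=
    ⟨by decide, fun a b => by fin_cases a <;> fin_cases b <;> decide⟩
  rw [hB, hC]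
  rcases neg_one_pow_eq_or ℤ l.length with h | h <;> rw [h]
  · simpa using hbase
  · simpa using hbase.neg ⟨![1, 2], by decide, by decide⟩ (by decide)
end

section
/- The mutation-finite matrix of type F_4 admits an unfolding: the 6×6 skew-symmetric matrix C with rows (0, 0, 1, 0, 0, 0), (0, 0, 0, 1, 0, 0), (−1, 0, 0, 0, 1, 0), (0, −1, 0, 0, 1, 0), (0, 0, −1, −1, 0, 1), (0, 0, 0, 0, −1, 0) is an unfolding of the 4×4 skew-symmetrizable matrix B with rows (0, 1, 0, 0), (−1, 0, 2, 0), (0, −1, 0, 1), (0, 0, −1, 0), with respect to the index sets E_1 = {1, 2}, E_2 = {3, 4}, E_3 = {5}, E_4 = {6}. -/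
open Matrix

/-!
The pairs `(μ_{k_1} ⋯ μ_{k_r} B, μ̂_{k_1} ⋯ μ̂_{k_r} C)` form a finite set: 120 pairs, all reached
within 7 mutations (60 matrices in the mutation class of `B`, each with two lifts).
A breadth-first search produces this list; kernel evaluation then certifies that it contains
`(B, C)`, is closed under the composite mutations and consists of pairs satisfying (1)–(2).
Nothing about the search itself needs to be proved: only its output is checked.
-/

instance {m n : ℕ} (π : Fin m → Fin n) (B : Matrix (Fin n) (Fin n) ℤ)
    (C : Matrix (Fin m) (Fin m) ℤ) : Decidable (SatisfiesUnfoldingConds π B C) :=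
  -- instance search does not find this one under the two binders by itself
  have (a b : Fin m) : Decidable (0 ≤ B (π a) (π b) → 0 ≤ C a b) := instDecidableForall
  inferInstanceAs (Decidable (_ ∧ _))

theorem isUnfolding_of_invariant {m n : ℕ} {π : Fin m → Fin n} {B : Matrix (Fin n) (Fin n) ℤ}
    {C : Matrix (Fin m) (Fin m) ℤ} (P : Matrix (Fin n) (Fin n) ℤ → Matrix (Fin m) (Fin m) ℤ → Prop)
    (hBC : P B C) (hmutate : ∀ B C k, P B C → P (mutate B k) (compMutate π C k))
    (hconds : ∀ B C, P B C → SatisfiesUnfoldingConds π B C) :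
    IsUnfolding π B C := by
  intro l
  apply hconds
  induction l generalizing B C with
  | nil => exact hBC
  | cons k l ih => exact ih (hmutate B C k hBC)

theorem compMutate_eq_foldl {m n : ℕ} (π : Fin m → Fin n) (C : Matrix (Fin m) (Fin m) ℤ)
    (i : Fin n) {l : List (Fin m)} (hsorted : l.Pairwise (· < ·))
    (hfiber : l.toFinset = Finset.univ.filter (fun a => π a = i)) :
    compMutate π C i = l.foldl mutate C := by
  rw [compMutate, ← hfiber, (List.toFinset_sort _ hsorted.nodup).2 (hsorted.imp le_of_lt)]

def bfs {α κ : Type*} [DecidableEq κ] (key : α → κ) (next : α → List α) :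
    ℕ → List α → List α → List α
  | 0, seen, _ => seen
  | depth + 1, seen, frontier =>
    let found := (frontier.flatMap next).foldl
      (fun acc a => if acc.1.any (key · == key a) then acc else (a :: acc.1, a :: acc.2))
      (seen, [])
    bfs key next depth found.1 found.2

/-- Comparing these lists is much cheaper for the kernel than deciding equality of matrices. -/
def pairKey {m n : ℕ} (p : Matrix (Fin n) (Fin n) ℤ × Matrix (Fin m) (Fin m) ℤ) :
    List (List ℤ) × List (List ℤ) :=
  (List.ofFn fun i => List.ofFn (p.1 i), List.ofFn fun i => List.ofFn (p.2 i))

theorem pairKey_injective {m n : ℕ} :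
    Function.Injective (pairKey : Matrix (Fin n) (Fin n) ℤ × Matrix (Fin m) (Fin m) ℤ → _) := by
  intro p q h
  simp only [pairKey, Prod.mk.injEq, List.ofFn_inj] at h
  exact Prod.ext (funext fun i => List.ofFn_injective (congrFun h.1 i))
    (funext fun i => List.ofFn_injective (congrFun h.2 i))

namespace F4

abbrev MatrixPair := Matrix (Fin 4) (Fin 4) ℤ × Matrix (Fin 6) (Fin 6) ℤ

def π : Fin 6 → Fin 4 := ![0, 0, 1, 1, 2, 3]

def fiber : Fin 4 → List (Fin 6) := ![[0, 1], [2, 3], [4], [5]]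

def initial : MatrixPair :=
  (!![0, 1, 0, 0; -1, 0, 2, 0; 0, -1, 0, 1; 0, 0, -1, 0],
   !![0, 0, 1, 0, 0, 0; 0, 0, 0, 1, 0, 0; -1, 0, 0, 0, 1, 0;
      0, -1, 0, 0, 1, 0; 0, 0, -1, -1, 0, 1; 0, 0, 0, 0, -1, 0])

/-- `compMutate π`, computed along the explicit fibers, which the kernel can evaluate
(unlike `Finset.sort`). -/
def mutatePair (p : MatrixPair) (k : Fin 4) : MatrixPair :=
  (mutate p.1 k, (fiber k).foldl mutate p.2)

theorem compMutate_eq (C : Matrix (Fin 6) (Fin 6) ℤ) (k : Fin 4) :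
    compMutate π C k = (fiber k).foldl mutate C := by
  have hfiber : ∀ k, (fiber k).Pairwise (· < ·) ∧
      (fiber k).toFinset = Finset.univ.filter (fun a => π a = k) := by decide
  exact compMutate_eq_foldl π C k (hfiber k).1 (hfiber k).2

def orbit : List MatrixPair :=
  bfs pairKey (fun p => List.ofFn (mutatePair p)) 7 [initial] [initial]

theorem orbit_certificate :
    pairKey initial ∈ orbit.map pairKey ∧
      ∀ p ∈ orbit, SatisfiesUnfoldingConds π p.1 p.2 ∧
        ∀ k, pairKey (mutatePair p k) ∈ orbit.map pairKey := by
  decide +kernel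

theorem isUnfolding : IsUnfolding π initial.1 initial.2 := by
  have certificate := orbit_certificate
  simp only [List.mem_map_of_injective pairKey_injective] at certificate
  obtain ⟨hinitial, horbit⟩ := certificate
  refine isUnfolding_of_invariant (fun B C => (B, C) ∈ orbit) hinitial ?_ ?_
  · intro B C k hBC
    rw [compMutate_eq]
    exact (horbit _ hBC).2 k
  · exact fun B C hBC => (horbit _ hBC).1

end F4

/-- The mutation-finite matrix of type `F_4` admits the stated unfolding, with
`E_1 = {1, 2}`, `E_2 = {3, 4}`, `E_3 = {5}`, `E_4 = {6}`. -/
theorem unfolding_F4 :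
    IsUnfolding (![0, 0, 1, 1, 2, 3] : Fin 6 → Fin 4)
      !![0, 1, 0, 0; -1, 0, 2, 0; 0, -1, 0, 1; 0, 0, -1, 0]
      !![0, 0, 1, 0, 0, 0; 0, 0, 0, 1, 0, 0; -1, 0, 0, 0, 1, 0;
         0, -1, 0, 0, 1, 0; 0, 0, -1, -1, 0, 1; 0, 0, 0, 0, -1, 0] :=
  F4.isUnfolding
end
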